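/- If k = 2^λ is a power of 2 with λ ≥ 2, then Γ(k) ≤ (3/2)·k, where Γ(k) is the largest odd positive integer m such that the length-km prefix of the Thue-Morse word is not a k-anti-power. -/

import Mathlib

open Filter

/-- The Thue-Morse word, indexed from 1: `tm i` is the parity of the number of
1's in the binary expansion of `i - 1`. -/
def tm (i : ℕ) : ℕ := (Nat.digits 2 (i - 1)).sum % 2

/-- The factor `t_a t_{a+1} ⋯ t_b` of the Thue-Morse word. -/
def seg (a b : ℕ) : List ℕ := (List.range (b + 1 - a)).map (fun j => tm (a + j))

/-- The `i`-th block of length `m` of the Thue-Morse word (blocks indexed from 0):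
`t_{im+1} ⋯ t_{(i+1)m}`. -/
def block (m i : ℕ) : List ℕ := seg (i * m + 1) ((i + 1) * m)

/-- The prefix of the Thue-Morse word of length `k * m` is a `k`-anti-power:
its `k` consecutive blocks of length `m` are pairwise distinct. -/
def IsAntiPowerPrefix (m k : ℕ) : Prop :=
  ∀ i j, i < k → j < k → i ≠ j → block m i ≠ block m j

/-- `w` is a factor (contiguous substring) of the Thue-Morse word. -/
def IsFactor (w : List ℕ) : Prop :=
  ∃ a : ℕ, w = (List.range w.length).map (fun j => tm (a + 1 + j))

/-- `δ(m) = ⌈log₂ (m/3)⌉` (a nonnegative integer for `m ≥ 2`). -/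
noncomputable def delta (m : ℕ) : ℕ := (⌈Real.logb 2 ((m : ℝ) / 3)⌉).toNat

/-- `⌈log₂ m⌉`. -/
noncomputable def ell (m : ℕ) : ℕ := (⌈Real.logb 2 (m : ℝ)⌉).toNat

/-- `K(m)`: the smallest `k` such that the prefix of the Thue-Morse word of
length `k * m` is not a `k`-anti-power. -/
noncomputable def Kap (m : ℕ) : ℕ := sInf {k | ¬ IsAntiPowerPrefix m k}

/-- `γ(k)`: the smallest odd positive integer `m` such that the prefix of the
Thue-Morse word of length `k * m` is a `k`-anti-power. -/
noncomputable def gam (k : ℕ) : ℕ := sInf {m | Odd m ∧ IsAntiPowerPrefix m k}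

/-- `Γ(k)`: the largest odd positive integer `m` such that the prefix of the
Thue-Morse word of length `k * m` is not a `k`-anti-power. -/
noncomputable def Gam (k : ℕ) : ℕ := sSup {m | Odd m ∧ ¬ IsAntiPowerPrefix m k}

/-- The Thue-Morse morphism `μ` (0 ↦ 01, 1 ↦ 10) on words. -/
def mu (w : List ℕ) : List ℕ := w.flatMap (fun a => if a = 0 then [0, 1] else [1, 0])

/-!
Two blocks `i < j < k = 2^λ` of odd length `m` start at positions differing by
`(j - i) m = 2^s e` with `e` odd and `2^s ≤ k / 2`. Every factor of the Thue–Morse word `t` of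
length `3·2^s + 1` differs from its translate by `2^s e`: for `s = 0` an odd shift of a length-4
factor would force three equal consecutive letters, and the identities `t (2n) = t n`,
`t (2n + 1) = 1 - t n` lift a counterexample with shift `2^(s+1) e` to one with shift `2^s e`.
So if `2m > 3k`, then `m ≥ 3·2^s + 1` and the blocks differ.
-/

/-- The Thue–Morse word indexed from `0`, so that `tm (n + 1) = thueMorse n`. -/
def thueMorse (n : ℕ) : ℕ := (Nat.digits 2 n).sum % 2

lemma thueMorse_lt_two (n : ℕ) : thueMorse n < 2 := Nat.mod_lt _ two_pos

@[simp]
lemma thueMorse_two_mul (n : ℕ) : thueMorse (2 * n) = thueMorse n := by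
  rcases Nat.eq_zero_or_pos n with rfl | hn
  · rfl
  · simp [thueMorse, Nat.digits_def' one_lt_two (by omega : 0 < 2 * n)]

@[simp]
lemma thueMorse_two_mul_add_one (n : ℕ) : thueMorse (2 * n + 1) = 1 - thueMorse n := by
  have h := Nat.digits_def' one_lt_two (Nat.succ_pos (2 * n))
  rw [show (2 * n + 1) % 2 = 1 by omega, show (2 * n + 1) / 2 = n by omega] at h
  simp only [thueMorse, h, List.sum_cons]
  omega

lemma thueMorse_two_mul_add_eq_iff (a c : ℕ) {b : ℕ} (hb : b < 2) :
    thueMorse (2 * a + b) = thueMorse (2 * c + b) ↔ thueMorse a = thueMorse c := by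
  have := thueMorse_lt_two a
  have := thueMorse_lt_two c
  interval_cases b
  · simp
  · simp only [thueMorse_two_mul_add_one]
    omega

lemma thueMorse_succ_ne_of_eq_succ {n : ℕ} (h : thueMorse n = thueMorse (n + 1)) :
    thueMorse (n + 1) ≠ thueMorse (n + 2) := by
  obtain ⟨c, rfl | rfl⟩ := Nat.even_or_odd' n
  · have := thueMorse_lt_two c
    simp only [thueMorse_two_mul, thueMorse_two_mul_add_one] at h
    omega
  · have := thueMorse_lt_two (c + 1)
    rw [show 2 * c + 1 + 1 = 2 * (c + 1) by ring, show 2 * c + 1 + 2 = 2 * (c + 1) + 1 by ring]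
    simp only [thueMorse_two_mul, thueMorse_two_mul_add_one, ne_eq]
    omega

lemma thueMorse_eq_succ_of_eq_of_eq {x y : ℕ} (h0 : thueMorse (2 * x) = thueMorse (2 * y + 1))
    (h1 : thueMorse (2 * x + 1) = thueMorse (2 * (y + 1))) : thueMorse y = thueMorse (y + 1) := by
  have := thueMorse_lt_two x
  have := thueMorse_lt_two y
  simp only [thueMorse_two_mul, thueMorse_two_mul_add_one] at h0 h1
  omega

lemma exists_thueMorse_ne_of_odd_shift (N : ℕ) {e : ℕ} (he : Odd e) :
    ∃ r < 4, thueMorse (N + r) ≠ thueMorse (N + r + e) := by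
  by_contra! H
  have hp : ∀ p, N ≤ p → p ≤ N + 3 → ∀ q, q = p + e → thueMorse p = thueMorse q := by
    rintro p hNp hpN q rfl
    obtain ⟨r, rfl⟩ := Nat.exists_eq_add_of_le hNp
    exact H r (by omega)
  obtain ⟨h, rfl⟩ := he
  obtain ⟨c, rfl | rfl⟩ := Nat.even_or_odd' N
  · have h1 := thueMorse_eq_succ_of_eq_of_eq (x := c) (y := c + h)
      (hp _ le_rfl (by omega) _ (by ring)) (hp _ (by omega) (by omega) _ (by ring))
    have h2 := thueMorse_eq_succ_of_eq_of_eq (x := c + 1) (y := c + h + 1)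
      (hp _ (by omega) (by omega) _ (by ring)) (hp _ (by omega) (by omega) _ (by ring))
    exact thueMorse_succ_ne_of_eq_succ h1 h2
  · have h1 := thueMorse_eq_succ_of_eq_of_eq (x := c + h + 1) (y := c)
      (hp _ le_rfl (by omega) _ (by ring)).symm (hp _ (by omega) (by omega) _ (by ring)).symm
    have h2 := thueMorse_eq_succ_of_eq_of_eq (x := c + h + 2) (y := c + 1)
      (hp _ (by omega) (by omega) _ (by ring)).symm (hp _ (by omega) (by omega) _ (by ring)).symm
    exact thueMorse_succ_ne_of_eq_succ h1 h2

lemma exists_thueMorse_ne_of_shift (s N : ℕ) {e : ℕ} (he : Odd e) :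
    ∃ r < 3 * 2 ^ s + 1, thueMorse (N + r) ≠ thueMorse (N + r + 2 ^ s * e) := by
  induction s generalizing N with
  | zero => simpa using exists_thueMorse_ne_of_odd_shift N he
  | succ s ih =>
    obtain ⟨r, hr, hne⟩ := ih (N / 2)
    refine ⟨2 * r, by rw [pow_succ]; omega, fun heq => hne ?_⟩
    have hshift : N + 2 * r + 2 ^ (s + 1) * e = 2 * (N / 2 + r + 2 ^ s * e) + N % 2 := by
      rw [pow_succ, mul_comm _ 2, mul_assoc]; omega
    have hpos : N + 2 * r = 2 * (N / 2 + r) + N % 2 := by omega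
    rwa [hshift, hpos, thueMorse_two_mul_add_eq_iff _ _ (Nat.mod_lt N two_pos)] at heq

lemma block_eq_map (m i : ℕ) :
    block m i = (List.range m).map (fun r => thueMorse (i * m + r)) := by
  unfold block seg
  rw [show (i + 1) * m + 1 - (i * m + 1) = m by rw [add_mul]; omega]
  refine List.map_congr_left fun r _ => ?_
  simp only [tm, thueMorse, add_right_comm _ 1 r, Nat.add_sub_cancel]

lemma block_ne_of_eq_add {m i j s e : ℕ} (hm : Odd m) (he : Odd e) (hs : 3 * 2 ^ s < m)
    (hj : j = i + 2 ^ s * e) : block m i ≠ block m j := by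
  obtain ⟨r, hr, hne⟩ := exists_thueMorse_ne_of_shift s (i * m) (he.mul hm)
  rw [block_eq_map, block_eq_map, Ne, List.map_inj_left]
  refine fun h => hne ?_
  rw [h r (List.mem_range.2 (by omega)), hj]
  ring_nf

lemma isAntiPowerPrefix_two_pow {lam m : ℕ} (hm : Odd m) (hlt : 3 * 2 ^ lam < 2 * m) :
    IsAntiPowerPrefix m (2 ^ lam) := by
  suffices key : ∀ i j, i < j → j < 2 ^ lam → block m i ≠ block m j by
    intro i j hi hj hij
    rcases Nat.lt_or_gt_of_ne hij with h | h
    · exact key i j h hj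
    · exact (key j i h hi).symm
  intro i j hij hj
  obtain ⟨s, e, hndvd, hji⟩ :=
    Nat.exists_eq_pow_mul_and_not_dvd (n := j - i) (by omega) 2 (by norm_num)
  have he : Odd e := Nat.odd_iff.2 (by omega)
  have hs : s < lam := by
    by_contra! h
    have := Nat.pow_le_pow_right two_pos h
    have := Nat.le_mul_of_pos_right (2 ^ s) he.pos
    omega
  have : 2 * 2 ^ s ≤ 2 ^ lam := by rw [← pow_succ']; exact Nat.pow_le_pow_right two_pos hs
  exact block_ne_of_eq_add (s := s) hm he (by omega) (by omega)

lemma two_mul_Gam_two_pow_le (lam : ℕ) : 2 * Gam (2 ^ lam) ≤ 3 * 2 ^ lam := by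
  by_contra! h
  obtain ⟨m, ⟨hodd, hnot⟩, hm⟩ := exists_lt_of_lt_csSup'
    (s := {m | Odd m ∧ ¬ IsAntiPowerPrefix m (2 ^ lam)})
    (show 3 * 2 ^ lam / 2 < Gam (2 ^ lam) by omega)
  exact hnot (isAntiPowerPrefix_two_pow hodd (by omega))

theorem stmt14_general (lam : ℕ) :
    (Gam (2 ^ lam) : ℝ) ≤ (3 / 2) * 2 ^ lam := by
  have h : ((2 * Gam (2 ^ lam) : ℕ) : ℝ) ≤ ((3 * 2 ^ lam : ℕ) : ℝ) := by
    exact_mod_cast two_mul_Gam_two_pow_le lam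
  push_cast at h
  linarith

theorem stmt14 (lam : ℕ) (hlam : 2 ≤ lam) :
    (Gam (2 ^ lam) : ℝ) ≤ (3 / 2) * 2 ^ lam :=
  stmt14_general lam
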